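/- arXiv:2312.03282 — 3 statements merged into one kernel-verified Lean document; each statement's English description precedes it below -/
import Mathlib

section
/- Let D = 6. Define p1*(t1) = 0 if t1 ≥ 2, p1*(t1) = 1 if t1 ≤ −2, and p1*(t1) = (2 − t1)/4 otherwise; and define p2*(p1, t2) = 0 if D + 2 − 2·p1 ≤ t2, p2*(p1, t2) = 1 − p1 if D − 2 + 2·p1 ≥ t2, and p2*(p1, t2) = (2 + D − 2·p1 − t2)/4 otherwise. Then for all t1 ≥ 0 and t2 ≥ 0, the toll-setter's income p1*(t1)·t1 + p2*(p1*(t1), t2)·t2 is at most 4; moreover, for every t1 ≥ 2 the income equals 4 at t2 = 4, where p1*(t1) = 0 and p2*(0, 4) = 1. -/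
/-!
Write `p₁` for the second level's reaction. On `t₁ ≥ 0` it lies in `[0, 1]` and satisfies
`p₁ t₁ = p₁ (2 - 4 p₁)`, since either `p₁ = 0` or `t₁ = 2 - 4 p₁`. For `D = 6` the third level's
income `p₂ t₂` is maximal at the kink `t₂ = D - 2 + 2 p₁`, where it equals `(1 - p₁)(4 + 2 p₁)`.
Adding the two bounds gives `4 - 6 p₁² ≤ 4`.
-/

noncomputable section

open Set

def secondLevelReaction (t₁ : ℝ) : ℝ :=
  if 2 ≤ t₁ then 0 else if t₁ ≤ -2 then 1 else (2 - t₁) / 4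

def thirdLevelReaction (D p₁ t₂ : ℝ) : ℝ :=
  if D + 2 - 2 * p₁ ≤ t₂ then 0
  else if D - 2 + 2 * p₁ ≥ t₂ then 1 - p₁
  else (2 + D - 2 * p₁ - t₂) / 4

lemma secondLevelReaction_mem_Icc (t₁ : ℝ) : secondLevelReaction t₁ ∈ Icc 0 1 := by
  unfold secondLevelReaction
  split_ifs <;> constructor <;> linarith

lemma secondLevelReaction_of_two_le {t₁ : ℝ} (h : 2 ≤ t₁) : secondLevelReaction t₁ = 0 :=
  if_pos h

lemma secondLevelReaction_mul_self {t₁ : ℝ} (h : -2 ≤ t₁) :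
    secondLevelReaction t₁ * t₁ = secondLevelReaction t₁ * (2 - 4 * secondLevelReaction t₁) := by
  unfold secondLevelReaction
  split_ifs <;> linarith

/-- With `a = D - 2 + 2 p₁` and `b = D + 2 - 2 p₁`, the interior income `(b - t₂) t₂ / 4` decreases
past its vertex `b / 2 ≤ a`, so the maximum sits at `t₂ = a`. -/
lemma thirdLevelReaction_mul_le {D p₁ : ℝ} (hp₁ : p₁ ≤ 1) (hD : 6 ≤ D + 6 * p₁) (t₂ : ℝ) :
    thirdLevelReaction D p₁ t₂ * t₂ ≤ (1 - p₁) * (D - 2 + 2 * p₁) := by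
  unfold thirdLevelReaction
  split_ifs with hb ha
  · nlinarith
  · nlinarith
  · rw [not_le] at hb ha
    nlinarith [mul_nonneg (sub_nonneg.2 ha.le) (by linarith : (0 : ℝ) ≤ t₂ + D - 6 + 6 * p₁)]

end

/-- Nested toll-setting with `D = 6`: with the rational reactions `p1*` and `p2*`, the
toll-setter's income is at most `4` for all nonnegative tolls, and for every `t1 ≥ 2`
the income equals `4` at `t2 = 4`, where `p1*(t1) = 0` and `p2*(0, 4) = 1`. -/
theorem stmt3 :
    let D : ℝ := 6
    let p1s : ℝ → ℝ := fun t1 => if 2 ≤ t1 then 0 else if t1 ≤ -2 then 1 else (2 - t1) / 4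
    let p2s : ℝ → ℝ → ℝ := fun p1 t2 => if D + 2 - 2 * p1 ≤ t2 then 0
      else if D - 2 + 2 * p1 ≥ t2 then 1 - p1
      else (2 + D - 2 * p1 - t2) / 4
    (∀ t1 ≥ (0 : ℝ), ∀ t2 ≥ (0 : ℝ), p1s t1 * t1 + p2s (p1s t1) t2 * t2 ≤ 4) ∧
      ∀ t1 ≥ (2 : ℝ), p1s t1 * t1 + p2s (p1s t1) 4 * 4 = 4 ∧ p1s t1 = 0 ∧ p2s 0 4 = 1 := by
  intro D p1s p2s
  have hp2 : p2s 0 4 = 1 := by norm_num [p2s, D]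
  refine ⟨fun t₁ ht₁ t₂ _ => ?_, fun t₁ ht₁ => ?_⟩
  · change secondLevelReaction t₁ * t₁ + thirdLevelReaction 6 (secondLevelReaction t₁) t₂ * t₂ ≤ 4
    set p₁ := secondLevelReaction t₁
    obtain ⟨hp₁, hp₁'⟩ := secondLevelReaction_mem_Icc t₁
    have h₂ := thirdLevelReaction_mul_le (D := 6) hp₁' (by linarith) t₂
    calc p₁ * t₁ + thirdLevelReaction 6 p₁ t₂ * t₂
        ≤ p₁ * (2 - 4 * p₁) + (1 - p₁) * (6 - 2 + 2 * p₁) := by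
          rw [secondLevelReaction_mul_self (by linarith)]; linarith
      _ = 4 - 6 * p₁ ^ 2 := by ring
      _ ≤ 4 := by nlinarith
  · have hp1 : p1s t₁ = 0 := secondLevelReaction_of_two_le ht₁
    refine ⟨?_, hp1, hp2⟩
    rw [hp1, hp2]
    ring
end

section
/- Let D = −1.5. Define p1*(t1) = 0 if t1 ≥ 2, p1*(t1) = 1 if t1 ≤ −2, and p1*(t1) = (2 − t1)/4 otherwise; and define p2*(p1, t2) = 0 if D + 2 − 2·p1 ≤ t2, p2*(p1, t2) = 1 − p1 if D − 2 + 2·p1 ≥ t2, and p2*(p1, t2) = (2 + D − 2·p1 − t2)/4 otherwise. Then for all t1 ≥ 0 and t2 ≥ 0, the toll-setter's income p1*(t1)·t1 + p2*(p1*(t1), t2)·t2 is at most 0.25; moreover, for t1 = 1 and every t2 ≥ 0 the income equals 0.25, where p1*(1) = 0.25 and p2*(0.25, t2) = 0. -/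
/-- Nested toll-setting with `D = −1.5`: with the rational reactions `p1*` and `p2*`, the
toll-setter's income is at most `0.25` for all nonnegative tolls, and for `t1 = 1` and every
`t2 ≥ 0` the income equals `0.25`, where `p1*(1) = 0.25` and `p2*(0.25, t2) = 0`. -/
theorem stmt4 :
    let D : ℝ := -1.5
    let p1s : ℝ → ℝ := fun t1 => if 2 ≤ t1 then 0 else if t1 ≤ -2 then 1 else (2 - t1) / 4
    let p2s : ℝ → ℝ → ℝ := fun p1 t2 => if D + 2 - 2 * p1 ≤ t2 then 0
      else if D - 2 + 2 * p1 ≥ t2 then 1 - p1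
      else (2 + D - 2 * p1 - t2) / 4
    (∀ t1 ≥ (0 : ℝ), ∀ t2 ≥ (0 : ℝ), p1s t1 * t1 + p2s (p1s t1) t2 * t2 ≤ 0.25) ∧
      ∀ t2 ≥ (0 : ℝ), p1s 1 * 1 + p2s (p1s 1) t2 * t2 = 0.25 ∧
        p1s 1 = 0.25 ∧ p2s 0.25 t2 = 0 := by
  intro D p1s p2s
  constructor
  · intro t1 ht1 t2 ht2
    simp only [D, p1s, p2s]
    split_ifs <;>
      nlinarith [sq_nonneg (t1 - 1), sq_nonneg (t2 - 0.25), sq_nonneg t2,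
        sq_nonneg (2 * (t1 - 1) - t2 / 2), sq_nonneg (t1 - 2)]
  · intro t2 ht2
    simp only [D, p1s, p2s]
    norm_num
    exact ⟨fun h => absurd h (not_lt.2 ht2), fun h => absurd h (not_lt.2 ht2)⟩
end

section
/- Consider the trilevel problem: minimize −x + 4y over (x, y, z) subject to x + y ≤ 1, x ∈ [0, 0.5], y ∈ [0, 1], z ∈ [0, 1], where (y, z) must minimize 2y + z subject to −2x + y ≤ −z among pairs for which z minimizes −z² + y subject to z ≤ x and z ∈ [0, 1]. Precisely: for each x ∈ [0, 0.5] and y, the third-level reaction set is the set of minimizers of −z² + y over { z : 0 ≤ z ≤ 1, z ≤ x }; for each x, the second-level reaction set is the set of pairs (y, z) with z in the third-level reaction set, y ∈ [0, 1], and −2x + y ≤ −z, minimizing 2y + z among all such pairs. Then the leader's optimal value of −x + 4y over all x ∈ [0, 0.5] with x + y ≤ 1 and (y, z) in the second-level reaction set is −0.5, attained at (x, y, z) = (0.5, 0, 0.5). -/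
/-- The trilevel example of Tilahun et al. (2012), with the corrected solution: the leader's
optimal value of `−x + 4y` over its feasible set (defined through the nested rational
reaction sets) is `−0.5`, attained at `(x, y, z) = (0.5, 0, 0.5)`. -/
theorem stmt8 :
    let R3 : ℝ → ℝ → Set ℝ := fun x y =>
      {z | (0 ≤ z ∧ z ≤ 1 ∧ z ≤ x) ∧
        ∀ z', (0 ≤ z' ∧ z' ≤ 1 ∧ z' ≤ x) → -z ^ 2 + y ≤ -z' ^ 2 + y}
    let R2 : ℝ → Set (ℝ × ℝ) := fun x =>
      {p | (p.1 ∈ Set.Icc (0 : ℝ) 1 ∧ -2 * x + p.1 ≤ -p.2 ∧ p.2 ∈ R3 x p.1) ∧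
        ∀ q : ℝ × ℝ, (q.1 ∈ Set.Icc (0 : ℝ) 1 ∧ -2 * x + q.1 ≤ -q.2 ∧ q.2 ∈ R3 x q.1) →
          2 * p.1 + p.2 ≤ 2 * q.1 + q.2}
    let Feas : Set (ℝ × ℝ × ℝ) :=
      {v | v.1 ∈ Set.Icc (0 : ℝ) 0.5 ∧ v.1 + v.2.1 ≤ 1 ∧ (v.2.1, v.2.2) ∈ R2 v.1}
    ((0.5, 0, 0.5) : ℝ × ℝ × ℝ) ∈ Feas ∧
      (∀ v ∈ Feas, -(0.5 : ℝ) ≤ -v.1 + 4 * v.2.1) ∧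
      -(0.5 : ℝ) + 4 * (0 : ℝ) = -0.5 := by
  intro R3 R2 Feas
  refine ⟨?_, ?_, by norm_num⟩
  · -- membership
    refine ⟨by norm_num, by norm_num, ⟨⟨by norm_num, by norm_num, ⟨⟨by norm_num, by norm_num, le_refl _⟩, ?_⟩⟩, ?_⟩⟩
    · intro z' ⟨h0, h1, hx⟩
      nlinarith
    · rintro ⟨y', z'⟩ ⟨⟨hy0, hy1⟩, hc, ⟨⟨hz0, hz1, hzx⟩, hmin⟩⟩
      simp only at *
      have h := hmin 0.5 (by norm_num)
      -- z'^2 ≥ 0.25, z' ≤ 0.5, z' ≥ 0 ⇒ z' = 0.5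
      have hz : z' = 0.5 := by nlinarith
      nlinarith
  · rintro ⟨x, y, z⟩ ⟨⟨hx0, hx5⟩, hsum, ⟨⟨⟨hy0, hy1⟩, hc, ⟨⟨hz0, hz1, hzx⟩, hmin3⟩⟩, hmin2⟩⟩
    simp only at *
    -- z = x
    have hzx2 := hmin3 x ⟨hx0, by linarith, le_refl x⟩
    have hzeq : z = x := by nlinarith
    -- (0, x) is feasible for level 2
    have hq := hmin2 (0, x) ⟨⟨le_refl _, by norm_num⟩, by simp; linarith,
      ⟨⟨hx0, by linarith, le_refl x⟩, fun z' ⟨h0, h1, hx'⟩ => by nlinarith⟩⟩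
    -- 2y + z ≤ x, z = x ⇒ y ≤ 0, with y ≥ 0 ⇒ y = 0
    simp only at hq
    have hy : y = 0 := by nlinarith
    rw [hy]; linarith
end
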